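/- arXiv:2105.00956 — 5 statements merged into one kernel-verified Lean document; each statement's English description precedes it below -/
import Mathlib

section
/- Let H1 = (V1, 𝓔1) and H2 = (V2, 𝓔2) be finite hypergraphs, and let a message-passing UniGNN (same layer functions φ1^t, φ2^t and same constant initial feature c on both hypergraphs) compute features h^t. Let T ≥ 0 and suppose that the multisets of 1-GWL labels agree at every iteration t ∈ {0, …, T}, i.e. {{ l^t_{H1,i} : i ∈ V1 }} = {{ l^t_{H2,i} : i ∈ V2 }}, and that the multisets of UniGNN features agree at every iteration t ∈ {0, …, T−1}, i.e. {{ h^t_{H1,i} : i ∈ V1 }} = {{ h^t_{H2,i} : i ∈ V2 }}. Then for every t ∈ {0, …, T} and all vertices i1 ∈ V1, i2 ∈ V2, the implication l^t_{H1,i1} = l^t_{H2,i2} ⟹ h^t_{H1,i1} = h^t_{H2,i2} holds. -/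
/-!
Induct on `t`. The 1-GWL label at `t + 1` determines the label at `t` and the multiset of
hyperedge labels at `t`. Equal multisets of hyperedge labels can be matched hyperedge by
hyperedge, and within matched hyperedges vertex by vertex, with equal labels at `t`; by the
inductive hypothesis the same matchings identify the multisets of features that the two
aggregation stages consume.
-/

/-- A finite hypergraph on a vertex type `V`: a finite set of nonempty
finite hyperedges. -/
structure FinHypergraph (V : Type) [DecidableEq V] where
  edges : Finset (Finset V)
  edges_nonempty : ∀ e ∈ edges, e.Nonempty

namespace FinHypergraph

variable {V : Type} [DecidableEq V]

/-- The incident hyperedges `E_i` of a vertex `i`. -/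
def incident (H : FinHypergraph V) (i : V) : Finset (Finset V) :=
  H.edges.filter (fun e => i ∈ e)

end FinHypergraph

/-- The type of 1-GWL labels at iteration `t`. -/
def LabelType : ℕ → Type
  | 0 => ℕ
  | t + 1 => Multiset (LabelType t × Multiset (LabelType t))

/-- The 1-GWL vertex label `l^t_{H,i}`: all vertices start with label `0`, and
`l^{t+1}_i = {{ (l^t_i, l^t_e) : e ∈ E_i }}` where `l^t_e = {{ l^t_j : j ∈ e }}`. -/
def gwlLabel {V : Type} [DecidableEq V] (H : FinHypergraph V) : (t : ℕ) → V → LabelType t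
  | 0, _ => (0 : ℕ)
  | t + 1, i =>
      ((H.incident i).val.map fun e => (gwlLabel H t i, e.val.map (gwlLabel H t)))

/-- The 1-GWL hyperedge label `l^t_e = {{ l^t_j : j ∈ e }}`. -/
def gwlEdgeLabel {V : Type} [DecidableEq V] (H : FinHypergraph V) (t : ℕ) (e : Finset V) :
    Multiset (LabelType t) :=
  e.val.map (gwlLabel H t)

/-- The multiset of 1-GWL labels of all vertices, `{{ l^t_{H,i} : i ∈ V }}`. -/
def gwlMultiset {V : Type} [DecidableEq V] [Fintype V] (H : FinHypergraph V) (t : ℕ) :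
    Multiset (LabelType t) :=
  (Finset.univ : Finset V).val.map (gwlLabel H t)

/-- The UniGNN feature `h^t_{H,i}` computed by two-stage message passing with
first-stage aggregations `φ1`, second-stage aggregations `φ2` and constant initial
feature `c`:  `h^{t+1}_i = φ2 t (h^t_i) {{ φ1 t {{ h^t_j : j ∈ e }} : e ∈ E_i }}`. -/
def uniFeat {V : Type} [DecidableEq V] {X : Type}
    (φ1 : ℕ → Multiset X → X) (φ2 : ℕ → X → Multiset X → X) (c : X)
    (H : FinHypergraph V) : (t : ℕ) → V → X
  | 0, _ => c
  | t + 1, i =>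
      φ2 t (uniFeat φ1 φ2 c H t i)
        ((H.incident i).val.map fun e => φ1 t (e.val.map (uniFeat φ1 φ2 c H t)))

/-- The multiset of UniGNN features of all vertices, `{{ h^t_{H,i} : i ∈ V }}`. -/
def uniFeatMultiset {V : Type} [DecidableEq V] [Fintype V] {X : Type}
    (φ1 : ℕ → Multiset X → X) (φ2 : ℕ → X → Multiset X → X) (c : X)
    (H : FinHypergraph V) (t : ℕ) : Multiset X :=
  (Finset.univ : Finset V).val.map (uniFeat φ1 φ2 c H t)

/-- `f` is an isomorphism between hypergraphs `H1` and `H2`. -/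
def IsHypergraphIso {V1 V2 : Type} [DecidableEq V1] [DecidableEq V2]
    (H1 : FinHypergraph V1) (H2 : FinHypergraph V2) (f : V1 ≃ V2) : Prop :=
  ∀ e : Finset V1, e ∈ H1.edges ↔ e.image f ∈ H2.edges

namespace Multiset

theorem map_eq_map_of_imp {α β γ δ : Type*} {s : Multiset α} {t : Multiset β}
    {f : α → γ} {g : β → γ} {f' : α → δ} {g' : β → δ} (h : s.map f = t.map g)
    (hfg : ∀ a ∈ s, ∀ b ∈ t, f a = g b → f' a = g' b) : s.map f' = t.map g' := by
  rw [← rel_eq, rel_map] at h ⊢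
  exact h.mono hfg

end Multiset

section GWL

variable {V : Type} [DecidableEq V] (H : FinHypergraph V) (t : ℕ) (i : V)

theorem map_fst_gwlLabel_succ :
    (gwlLabel H (t + 1) i).map Prod.fst =
      Multiset.replicate (H.incident i).card (gwlLabel H t i) := by
  simp only [gwlLabel, Multiset.map_map, Function.comp_def, Multiset.map_const']
  rfl

theorem map_snd_gwlLabel_succ :
    (gwlLabel H (t + 1) i).map Prod.snd = (H.incident i).val.map (gwlEdgeLabel H t) := by
  simp only [gwlLabel, Multiset.map_map, Function.comp_def]
  rfl

end GWL

section TwoHypergraphs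

variable {V1 V2 : Type} [DecidableEq V1] [DecidableEq V2]
  {H1 : FinHypergraph V1} {H2 : FinHypergraph V2} {t : ℕ} {i1 : V1} {i2 : V2}

theorem gwlLabel_eq_of_gwlLabel_succ_eq (h : gwlLabel H1 (t + 1) i1 = gwlLabel H2 (t + 1) i2) :
    gwlLabel H1 t i1 = gwlLabel H2 t i2 := by
  have hfst := congrArg (Multiset.map Prod.fst) h
  rw [map_fst_gwlLabel_succ, map_fst_gwlLabel_succ] at hfst
  have hcard := congrArg Multiset.card hfst
  simp only [Multiset.card_replicate] at hcard
  by_cases h0 : (H1.incident i1).card = 0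
  · -- a vertex without incident hyperedges has the empty label from iteration 1 on
    obtain _ | s := t
    · rfl
    · rw [h0, eq_comm, Finset.card_eq_zero] at hcard
      rw [Finset.card_eq_zero] at h0
      simp only [gwlLabel, h0, hcard]
      rfl
  · rw [hcard] at hfst
    exact Multiset.replicate_right_injective (hcard ▸ h0) hfst

theorem uniFeat_succ_eq_of_gwlLabel_succ_eq {X : Type} {φ1 : ℕ → Multiset X → X}
    {φ2 : ℕ → X → Multiset X → X} {c : X}
    (ih : ∀ j1 j2, gwlLabel H1 t j1 = gwlLabel H2 t j2 →
      uniFeat φ1 φ2 c H1 t j1 = uniFeat φ1 φ2 c H2 t j2)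
    (h : gwlLabel H1 (t + 1) i1 = gwlLabel H2 (t + 1) i2) :
    uniFeat φ1 φ2 c H1 (t + 1) i1 = uniFeat φ1 φ2 c H2 (t + 1) i2 := by
  have hedges : (H1.incident i1).val.map (gwlEdgeLabel H1 t) =
      (H2.incident i2).val.map (gwlEdgeLabel H2 t) := by
    rw [← map_snd_gwlLabel_succ, ← map_snd_gwlLabel_succ, h]
  have hmsg : (H1.incident i1).val.map (fun e => φ1 t (e.val.map (uniFeat φ1 φ2 c H1 t))) =
      (H2.incident i2).val.map (fun e => φ1 t (e.val.map (uniFeat φ1 φ2 c H2 t))) :=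
    Multiset.map_eq_map_of_imp hedges fun _ _ _ _ he =>
      congrArg (φ1 t) (Multiset.map_eq_map_of_imp he fun j1 _ j2 _ => ih j1 j2)
  simp only [uniFeat]
  rw [ih i1 i2 (gwlLabel_eq_of_gwlLabel_succ_eq h), hmsg]

end TwoHypergraphs

theorem uniFeat_eq_of_gwlLabel_eq_general
    {X : Type} (φ1 : ℕ → Multiset X → X) (φ2 : ℕ → X → Multiset X → X) (c : X)
    {V1 V2 : Type} [DecidableEq V1] [DecidableEq V2]
    (H1 : FinHypergraph V1) (H2 : FinHypergraph V2) (T : ℕ) :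
    ∀ t ≤ T, ∀ (i1 : V1) (i2 : V2),
      gwlLabel H1 t i1 = gwlLabel H2 t i2 →
        uniFeat φ1 φ2 c H1 t i1 = uniFeat φ1 φ2 c H2 t i2 := by
  rintro t -
  induction t with
  | zero => exact fun _ _ _ => rfl
  | succ t ih => exact fun _ _ => uniFeat_succ_eq_of_gwlLabel_succ_eq ih

/-- **Lemma.** If the multisets of 1-GWL labels of `H1` and `H2` agree for all
`t ∈ {0,…,T}` and the multisets of UniGNN features agree for all `t ∈ {0,…,T-1}`,
then for every `t ∈ {0,…,T}` equal 1-GWL labels of two vertices imply equal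
UniGNN features. -/
theorem uniFeat_eq_of_gwlLabel_eq
    {X : Type} (φ1 : ℕ → Multiset X → X) (φ2 : ℕ → X → Multiset X → X) (c : X)
    {V1 V2 : Type} [DecidableEq V1] [Fintype V1] [DecidableEq V2] [Fintype V2]
    (H1 : FinHypergraph V1) (H2 : FinHypergraph V2) (T : ℕ)
    (hl : ∀ t ≤ T, gwlMultiset H1 t = gwlMultiset H2 t)
    (hh : ∀ t < T, uniFeatMultiset φ1 φ2 c H1 t = uniFeatMultiset φ1 φ2 c H2 t) :
    ∀ t ≤ T, ∀ (i1 : V1) (i2 : V2),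
      gwlLabel H1 t i1 = gwlLabel H2 t i2 →
        uniFeat φ1 φ2 c H1 t i1 = uniFeat φ1 φ2 c H2 t i2 :=
  uniFeat_eq_of_gwlLabel_eq_general φ1 φ2 c H1 H2 T
end

section
/- (Proposition 2) Let H1 = (V1, 𝓔1) and H2 = (V2, 𝓔2) be finite hypergraphs, and let a message-passing UniGNN (same layer functions φ1^t, φ2^t and same constant initial feature c on both hypergraphs) compute features h^t. If there exists an iteration T ≥ 0 such that the multisets of UniGNN features differ, i.e. {{ h^T_{H1,i} : i ∈ V1 }} ≠ {{ h^T_{H2,i} : i ∈ V2 }}, then the multisets of 1-GWL labels also differ at iteration T, i.e. {{ l^T_{H1,i} : i ∈ V1 }} ≠ {{ l^T_{H2,i} : i ∈ V2 }}. In other words, the discriminative power of any message-passing UniGNN is upper bounded by the 1-GWL test. -/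
/-!
The UniGNN feature of a vertex is a function of its 1-GWL label, and this function is the
same on every hypergraph. Indeed, by induction on `t`, equal labels at `t + 1` give equal
labels at `t` (read off any incident pair `(l^t_i, l^t_e)`; without incident hyperedges both
labels are trivial) and equal multisets of hyperedge labels, which the induction hypothesis
turns into equal inputs of `φ2 t`. Mapping equal label multisets through this function gives
equal feature multisets.
-/

namespace Multiset

variable {α β γ δ : Type*}

theorem map_eq_map_of_map_eq {s : Multiset α} {s' : Multiset β} {f : α → γ} {f' : β → γ}
    {g : α → δ} {g' : β → δ} (hg : ∀ a ∈ s, ∀ b ∈ s', f a = f' b → g a = g' b)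
    (hf : s.map f = s'.map f') : s.map g = s'.map g' := by
  rw [← rel_eq, rel_map] at hf ⊢
  exact hf.mono hg

end Multiset

section Refinement

variable {V V' : Type} [DecidableEq V] [DecidableEq V']
  (H : FinHypergraph V) (H' : FinHypergraph V')

theorem gwlLabel_succ (t : ℕ) (i : V) :
    gwlLabel H (t + 1) i =
      (H.incident i).val.map fun e => (gwlLabel H t i, gwlEdgeLabel H t e) :=
  rfl

theorem gwlLabel_eq_of_gwlLabel_succ_eq_s3 {t : ℕ} {i : V} {i' : V'}
    (h : gwlLabel H (t + 1) i = gwlLabel H' (t + 1) i') :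
    gwlLabel H t i = gwlLabel H' t i' := by
  rw [gwlLabel_succ, gwlLabel_succ] at h
  by_cases hi : H.incident i = ∅
  · have hi' : H'.incident i' = ∅ := by
      have hcard := congrArg Multiset.card h
      rw [Multiset.card_map, Multiset.card_map, hi] at hcard
      exact Finset.card_eq_zero.mp hcard.symm
    cases t with
    | zero => rfl
    | succ s => rw [gwlLabel_succ, gwlLabel_succ, hi, hi']; rfl
  · obtain ⟨e, he⟩ := Finset.nonempty_iff_ne_empty.mpr hi
    obtain ⟨e', -, he'⟩ := Multiset.mem_map.mp (h ▸ Multiset.mem_map_of_mem _ he)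
    exact (congrArg Prod.fst he').symm

theorem incident_map_gwlEdgeLabel_eq_of_gwlLabel_succ_eq {t : ℕ} {i : V} {i' : V'}
    (h : gwlLabel H (t + 1) i = gwlLabel H' (t + 1) i') :
    (H.incident i).val.map (gwlEdgeLabel H t) = (H'.incident i').val.map (gwlEdgeLabel H' t) := by
  rw [gwlLabel_succ, gwlLabel_succ] at h
  simpa only [Multiset.map_map, Function.comp_def] using congrArg (Multiset.map Prod.snd) h

theorem uniFeat_eq_of_gwlLabel_eq_s3 {X : Type} (φ1 : ℕ → Multiset X → X)
    (φ2 : ℕ → X → Multiset X → X) (c : X) (t : ℕ) {i : V} {i' : V'}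
    (h : gwlLabel H t i = gwlLabel H' t i') :
    uniFeat φ1 φ2 c H t i = uniFeat φ1 φ2 c H' t i' := by
  induction t generalizing i i' with
  | zero => rfl
  | succ t ih =>
    have hvertex := ih (gwlLabel_eq_of_gwlLabel_succ_eq_s3 H H' h)
    have hedges := incident_map_gwlEdgeLabel_eq_of_gwlLabel_succ_eq H H' h
    rw [uniFeat, uniFeat, hvertex,
      Multiset.map_eq_map_of_map_eq (fun e _ e' _ he =>
        congrArg (φ1 t) (Multiset.map_eq_map_of_map_eq (fun _ _ _ _ => ih) he)) hedges]

end Refinement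

/-- **Proposition 2.** If a message-passing UniGNN distinguishes two finite hypergraphs
at some iteration `T` (the multisets of features differ), then the 1-GWL test also
distinguishes them at iteration `T` (the multisets of labels differ): the discriminative
power of any message-passing UniGNN is upper bounded by the 1-GWL test. -/
theorem gwl_distinguishes_of_uniGNN_distinguishes
    {X : Type} (φ1 : ℕ → Multiset X → X) (φ2 : ℕ → X → Multiset X → X) (c : X)
    {V1 V2 : Type} [DecidableEq V1] [Fintype V1] [DecidableEq V2] [Fintype V2]
    (H1 : FinHypergraph V1) (H2 : FinHypergraph V2) (T : ℕ)
    (hA : uniFeatMultiset φ1 φ2 c H1 T ≠ uniFeatMultiset φ1 φ2 c H2 T) :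
    gwlMultiset H1 T ≠ gwlMultiset H2 T :=
  fun h => hA (Multiset.map_eq_map_of_map_eq
    (fun _ _ _ _ => uniFeat_eq_of_gwlLabel_eq_s3 H1 H2 φ1 φ2 c T) h)
end

section
/- Let a message-passing UniGNN have, for every layer t, injective first-stage aggregation φ1^t (injective as a function on finite multisets over X) and injective second-stage aggregation φ2^t (injective as a function on pairs of an element of X and a finite multiset over X). Then for every iteration t ≥ 0, the 1-GWL label determines the UniGNN feature injectively: for all finite hypergraphs H1, H2 and all vertices i1 ∈ V1, i2 ∈ V2, one has l^t_{H1,i1} = l^t_{H2,i2} if and only if h^t_{H1,i1} = h^t_{H2,i2}. Equivalently, for each t there exists an injective map M^t with M^t(l^t_{H,i}) = h^t_{H,i} for every finite hypergraph H and vertex i. -/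
/-!
Both procedures refine colourings by the same recursion: a vertex's new colour records its old
colour together with the multiset of colours of its incident hyperedges, each of which is the
multiset of colours of its vertices. With injective aggregations, equality of UniGNN features
at step `t + 1` therefore unfolds into exactly the same condition on step-`t` features as
equality of 1-GWL labels does on step-`t` labels, and induction on `t` closes the argument.
The one subtlety is on the 1-GWL side: a vertex without incident hyperedges loses its old label
(its new label is the empty multiset), but all such vertices have equal labels at every step.
-/

namespace Multiset

variable {α β γ δ : Type*}

theorem map_eq_map_iff_of_forall_iff {f : α → γ} {g : β → γ} {f' : α → δ} {g' : β → δ}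
    (h : ∀ a b, f a = g b ↔ f' a = g' b) {s : Multiset α} {t : Multiset β} :
    s.map f = t.map g ↔ s.map f' = t.map g' := by
  simp only [← rel_eq, rel_map]
  exact ⟨fun hr => hr.mono fun a _ b _ => (h a b).1, fun hr => hr.mono fun a _ b _ => (h a b).2⟩

theorem map_prodMk_eq_map_prodMk_iff {f : α → γ} {g : β → γ} {a b : δ}
    {s : Multiset α} {t : Multiset β} (hs : s ≠ 0) :
    s.map (fun x => (a, f x)) = t.map (fun y => (b, g y)) ↔ a = b ∧ s.map f = t.map g := by
  refine ⟨fun h => ⟨?_, ?_⟩, fun ⟨hab, hst⟩ => ?_⟩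
  · have hfst := congrArg (map Prod.fst) h
    simp only [map_map, Function.comp_def, map_const'] at hfst
    have ha : a ∈ replicate (card s) a := mem_replicate.2 ⟨(card_pos.2 hs).ne', rfl⟩
    exact eq_of_mem_replicate (hfst ▸ ha)
  · simpa only [map_map, Function.comp_def] using congrArg (map Prod.snd) h
  · subst hab
    simpa only [map_map, Function.comp_def] using congrArg (map (Prod.mk a)) hst

end Multiset

section Hypergraph

variable {V1 V2 : Type} [DecidableEq V1] [DecidableEq V2]
  (H1 : FinHypergraph V1) (H2 : FinHypergraph V2)

theorem gwlLabel_eq_of_incident_eq_empty {i1 : V1} {i2 : V2}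
    (h1 : H1.incident i1 = ∅) (h2 : H2.incident i2 = ∅) :
    ∀ t, gwlLabel H1 t i1 = gwlLabel H2 t i2
  | 0 => rfl
  | t + 1 => by simp only [gwlLabel, h1, h2, Finset.empty_val, Multiset.map_zero]; rfl

theorem gwlLabel_succ_eq_iff (t : ℕ) (i1 : V1) (i2 : V2) :
    gwlLabel H1 (t + 1) i1 = gwlLabel H2 (t + 1) i2 ↔
      gwlLabel H1 t i1 = gwlLabel H2 t i2 ∧
        (H1.incident i1).val.map (gwlEdgeLabel H1 t) =
          (H2.incident i2).val.map (gwlEdgeLabel H2 t) := by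
  by_cases h1 : H1.incident i1 = ∅
  · have h : gwlLabel H1 (t + 1) i1 = gwlLabel H2 (t + 1) i2 ↔ H2.incident i2 = ∅ := by
      simp only [gwlLabel, h1, Finset.empty_val, Multiset.map_zero]
      exact eq_comm.trans (Multiset.map_eq_zero.trans Finset.val_eq_zero)
    rw [h]
    refine ⟨fun h2 => ⟨gwlLabel_eq_of_incident_eq_empty H1 H2 h1 h2 t, ?_⟩, fun ⟨_, hmap⟩ => ?_⟩
    · simp [h1, h2]
    · simpa [h1, eq_comm (a := (0 : Multiset _))] using hmap
  · exact Multiset.map_prodMk_eq_map_prodMk_iff (by simpa using h1)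

variable {X : Type} {φ1 : ℕ → Multiset X → X} {φ2 : ℕ → X → Multiset X → X} (c : X)

theorem uniFeat_succ_eq_iff {t : ℕ} (hφ1 : Function.Injective (φ1 t))
    (hφ2 : Function.Injective (fun p : X × Multiset X => φ2 t p.1 p.2)) (i1 : V1) (i2 : V2) :
    uniFeat φ1 φ2 c H1 (t + 1) i1 = uniFeat φ1 φ2 c H2 (t + 1) i2 ↔
      uniFeat φ1 φ2 c H1 t i1 = uniFeat φ1 φ2 c H2 t i2 ∧
        (H1.incident i1).val.map (fun e => e.val.map (uniFeat φ1 φ2 c H1 t)) =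
          (H2.incident i2).val.map (fun e => e.val.map (uniFeat φ1 φ2 c H2 t)) := by
  rw [uniFeat, uniFeat, hφ2.eq_iff.trans Prod.mk_inj,
    Multiset.map_eq_map_iff_of_forall_iff fun _ _ => hφ1.eq_iff]

end Hypergraph

theorem gwlLabel_eq_iff_uniFeat_eq_of_injective_general
    {X : Type} (φ1 : ℕ → Multiset X → X) (φ2 : ℕ → X → Multiset X → X) (c : X)
    (hφ1 : ∀ t, Function.Injective (φ1 t))
    (hφ2 : ∀ t, Function.Injective (fun p : X × Multiset X => φ2 t p.1 p.2))
    {V1 V2 : Type} [DecidableEq V1] [DecidableEq V2]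
    (H1 : FinHypergraph V1) (H2 : FinHypergraph V2) (t : ℕ) (i1 : V1) (i2 : V2) :
    gwlLabel H1 t i1 = gwlLabel H2 t i2 ↔
      uniFeat φ1 φ2 c H1 t i1 = uniFeat φ1 φ2 c H2 t i2 := by
  induction t generalizing i1 i2 with
  | zero => exact iff_of_true rfl rfl
  | succ t ih =>
    have hedge : ∀ (e1 : Finset V1) (e2 : Finset V2),
        gwlEdgeLabel H1 t e1 = gwlEdgeLabel H2 t e2 ↔
          e1.val.map (uniFeat φ1 φ2 c H1 t) = e2.val.map (uniFeat φ1 φ2 c H2 t) :=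
      fun _ _ => Multiset.map_eq_map_iff_of_forall_iff ih
    rw [gwlLabel_succ_eq_iff, uniFeat_succ_eq_iff H1 H2 c (hφ1 t) (hφ2 t), ih,
      Multiset.map_eq_map_iff_of_forall_iff hedge]

/-- If all first-stage aggregations `φ1^t` and all second-stage aggregations `φ2^t`
of a message-passing UniGNN are injective, then at every iteration `t` the 1-GWL
label determines the UniGNN feature injectively: two vertices (of any two finite
hypergraphs) have the same 1-GWL label iff they have the same UniGNN feature. -/
theorem gwlLabel_eq_iff_uniFeat_eq_of_injective
    {X : Type} (φ1 : ℕ → Multiset X → X) (φ2 : ℕ → X → Multiset X → X) (c : X)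
    (hφ1 : ∀ t, Function.Injective (φ1 t))
    (hφ2 : ∀ t, Function.Injective (fun p : X × Multiset X => φ2 t p.1 p.2))
    {V1 V2 : Type} [DecidableEq V1] [Fintype V1] [DecidableEq V2] [Fintype V2]
    (H1 : FinHypergraph V1) (H2 : FinHypergraph V2) (t : ℕ) (i1 : V1) (i2 : V2) :
    gwlLabel H1 t i1 = gwlLabel H2 t i2 ↔
      uniFeat φ1 φ2 c H1 t i1 = uniFeat φ1 φ2 c H2 t i2 :=
  gwlLabel_eq_iff_uniFeat_eq_of_injective_general φ1 φ2 c hφ1 hφ2 H1 H2 t i1 i2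
end

section
/- (Theorem 1, local level) Let H1 = (V1, 𝓔1) and H2 = (V2, 𝓔2) be finite hypergraphs and let a message-passing UniGNN have, for every layer t, injective first-stage aggregation φ1^t (injective on finite multisets over X) and injective second-stage aggregation φ2^t (injective on pairs of an element of X and a finite multiset over X). If the 1-GWL test distinguishes H1 and H2 at some iteration T, i.e. {{ l^T_{H1,i} : i ∈ V1 }} ≠ {{ l^T_{H2,i} : i ∈ V2 }}, then the multisets of UniGNN features at iteration T also differ: {{ h^T_{H1,i} : i ∈ V1 }} ≠ {{ h^T_{H2,i} : i ∈ V2 }}. -/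
/-
With injective aggregations, equal UniGNN features force equal 1-GWL labels, by induction on the
layer: injectivity of `φ2` recovers the previous feature of the vertex and the multiset of hyperedge
messages, injectivity of `φ1` recovers each hyperedge's multiset of previous features, and the
induction hypothesis translates these into the previous labels. Hence equal feature multisets give
equal label multisets.
-/

theorem Multiset.map_eq_map_of_imp_s6 {α β γ δ : Type*} {s : Multiset α} {t : Multiset β}
    {f : α → γ} {g : β → γ} {f' : α → δ} {g' : β → δ}
    (h : ∀ a ∈ s, ∀ b ∈ t, f a = g b → f' a = g' b) (hst : s.map f = t.map g) :
    s.map f' = t.map g' := by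
  rw [← Multiset.rel_eq, Multiset.rel_map] at hst ⊢
  exact hst.mono h

theorem gwlLabel_eq_of_uniFeat_eq
    {X : Type} (φ1 : ℕ → Multiset X → X) (φ2 : ℕ → X → Multiset X → X) (c : X)
    (hφ1 : ∀ t, Function.Injective (φ1 t))
    (hφ2 : ∀ t, Function.Injective (fun p : X × Multiset X => φ2 t p.1 p.2))
    {V1 V2 : Type} [DecidableEq V1] [DecidableEq V2]
    (H1 : FinHypergraph V1) (H2 : FinHypergraph V2) (t : ℕ) {i : V1} {j : V2}
    (h : uniFeat φ1 φ2 c H1 t i = uniFeat φ1 φ2 c H2 t j) :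
    gwlLabel H1 t i = gwlLabel H2 t j := by
  induction t generalizing i j with
  | zero => rfl
  | succ t ih =>
    obtain ⟨hfeat, hmsgs⟩ := Prod.mk.inj (@hφ2 t (_, _) (_, _) h)
    refine Multiset.map_eq_map_of_imp_s6 (fun e _ e' _ hmsg => ?_) hmsgs
    exact Prod.ext (ih hfeat) (Multiset.map_eq_map_of_imp_s6 (fun _ _ _ _ => ih) (hφ1 t hmsg))

/-- **Theorem 1 (local level).** If all first-stage aggregations `φ1^t` and all
second-stage aggregations `φ2^t` of a message-passing UniGNN are injective, and the
1-GWL test distinguishes two finite hypergraphs at iteration `T` (the multisets of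
labels differ), then the multisets of UniGNN features at iteration `T` also differ. -/
theorem uniGNN_distinguishes_of_gwl_distinguishes
    {X : Type} (φ1 : ℕ → Multiset X → X) (φ2 : ℕ → X → Multiset X → X) (c : X)
    (hφ1 : ∀ t, Function.Injective (φ1 t))
    (hφ2 : ∀ t, Function.Injective (fun p : X × Multiset X => φ2 t p.1 p.2))
    {V1 V2 : Type} [DecidableEq V1] [Fintype V1] [DecidableEq V2] [Fintype V2]
    (H1 : FinHypergraph V1) (H2 : FinHypergraph V2) (T : ℕ)
    (hgwl : gwlMultiset H1 T ≠ gwlMultiset H2 T) :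
    uniFeatMultiset φ1 φ2 c H1 T ≠ uniFeatMultiset φ1 φ2 c H2 T := by
  intro hfeat
  apply hgwl
  exact Multiset.map_eq_map_of_imp_s6
    (fun i _ j _ => gwlLabel_eq_of_uniFeat_eq φ1 φ2 c hφ1 hφ2 H1 H2 T) hfeat
end

section
/- (Theorem 1, global level) Let H1 = (V1, 𝓔1) and H2 = (V2, 𝓔2) be finite hypergraphs, let a message-passing UniGNN have injective first-stage aggregations φ1^t and injective second-stage aggregations φ2^t for every layer t, and let the graph-level output be A(H) = READOUT( {{ h^T_{H,i} : i ∈ V }} ) for an injective function READOUT on finite multisets over X. If the 1-GWL test distinguishes H1 and H2 at iteration T, i.e. {{ l^T_{H1,i} : i ∈ V1 }} ≠ {{ l^T_{H2,i} : i ∈ V2 }}, then A(H1) ≠ A(H2). -/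
/-! Injective aggregations lose no information, so the 1-GWL label of a vertex can be read
off its UniGNN feature by a decoder that inverts `φ2` and `φ1` layer by layer. The decoder
is the same for all hypergraphs, so equal feature multisets map to equal label multisets. -/

open Function

section Decoder

variable {X : Type} [Nonempty X] (φ1 : ℕ → Multiset X → X) (φ2 : ℕ → X → Multiset X → X)

noncomputable def gwlDecoder : (t : ℕ) → X → LabelType t
  | 0, _ => (0 : ℕ)
  | t + 1, x =>
      let p := invFun (fun p : X × Multiset X => φ2 t p.1 p.2) x
      p.2.map fun y => (gwlDecoder t p.1, (invFun (φ1 t) y).map (gwlDecoder t))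

variable {φ1 φ2}

theorem gwlDecoder_uniFeat (hφ1 : ∀ t, Injective (φ1 t))
    (hφ2 : ∀ t, Injective (fun p : X × Multiset X => φ2 t p.1 p.2)) (c : X)
    {V : Type} [DecidableEq V] (H : FinHypergraph V) (t : ℕ) (i : V) :
    gwlDecoder φ1 φ2 t (uniFeat φ1 φ2 c H t i) = gwlLabel H t i := by
  induction t generalizing i with
  | zero => rfl
  | succ t ih =>
    have hpair := leftInverse_invFun (hφ2 t)
      (uniFeat φ1 φ2 c H t i,
        (H.incident i).val.map fun e => φ1 t (e.val.map (uniFeat φ1 φ2 c H t)))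
    simp only [uniFeat, gwlDecoder, gwlLabel] at hpair ⊢
    rw [hpair, Multiset.map_map]
    refine Multiset.map_congr rfl fun e _ => ?_
    simp only [comp_apply, leftInverse_invFun (hφ1 t) _, Multiset.map_map, ih]

theorem gwlMultiset_eq_map_gwlDecoder (hφ1 : ∀ t, Injective (φ1 t))
    (hφ2 : ∀ t, Injective (fun p : X × Multiset X => φ2 t p.1 p.2)) (c : X)
    {V : Type} [DecidableEq V] [Fintype V] (H : FinHypergraph V) (t : ℕ) :
    gwlMultiset H t = (uniFeatMultiset φ1 φ2 c H t).map (gwlDecoder φ1 φ2 t) := by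
  simp only [gwlMultiset, uniFeatMultiset, Multiset.map_map, comp_def,
    gwlDecoder_uniFeat hφ1 hφ2]

end Decoder

/-- **Theorem 1 (global level).** If all first-stage aggregations `φ1^t` and all
second-stage aggregations `φ2^t` of a message-passing UniGNN are injective, the
graph-level output is `A(H) = READOUT {{ h^T_{H,i} : i ∈ V }}` with `READOUT`
injective, and the 1-GWL test distinguishes two finite hypergraphs at iteration `T`,
then `A(H1) ≠ A(H2)`. -/
theorem uniGNN_readout_distinguishes_of_gwl_distinguishes
    {X Y : Type} (φ1 : ℕ → Multiset X → X) (φ2 : ℕ → X → Multiset X → X) (c : X)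
    (READOUT : Multiset X → Y)
    (hφ1 : ∀ t, Function.Injective (φ1 t))
    (hφ2 : ∀ t, Function.Injective (fun p : X × Multiset X => φ2 t p.1 p.2))
    (hR : Function.Injective READOUT)
    {V1 V2 : Type} [DecidableEq V1] [Fintype V1] [DecidableEq V2] [Fintype V2]
    (H1 : FinHypergraph V1) (H2 : FinHypergraph V2) (T : ℕ)
    (hgwl : gwlMultiset H1 T ≠ gwlMultiset H2 T) :
    READOUT (uniFeatMultiset φ1 φ2 c H1 T) ≠ READOUT (uniFeatMultiset φ1 φ2 c H2 T) := by
  have : Nonempty X := ⟨c⟩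
  intro hReadout
  apply hgwl
  rw [gwlMultiset_eq_map_gwlDecoder hφ1 hφ2 c, gwlMultiset_eq_map_gwlDecoder hφ1 hφ2 c,
    hR hReadout]
end
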